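/- Let n ≥ 1, k > 0, χ > 0 and λ₀ > 0, and suppose the matrix Φ₀ is positive definite. Then for every continuously differentiable e : [0,1]^n → ℝ vanishing on Γ_D and every continuous v : [0,1]^n → ℝ, the functional V = E + χ∫_Ω [2(xᵀ∇e(x)) + (n−1)e(x)] v(x) dx + (χk(n−1)/2)∫_{Γ_N} e² dΓ, where E = ½∫_Ω (|∇e(x)|² + v(x)²) dx, satisfies α·E ≤ V ≤ β·E, with α = 2λ_min(Φ₀) and β = 2(1 + 4/(π²n))λ_max(Φ₁) + χk(n−1). -/

import Mathlib

open MeasureTheory Real Matrix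

noncomputable section

/-- The closed unit hypercube `[0,1]^n`. -/
def cube (n : ℕ) : Set (Fin n → ℝ) := Set.univ.pi fun _ => Set.Icc (0:ℝ) 1

/-- Partial derivative of `u` in the `p`-th coordinate direction. -/
def pd {n : ℕ} (p : Fin n) (u : (Fin n → ℝ) → ℝ) (x : Fin n → ℝ) : ℝ :=
  fderiv ℝ u x (Pi.single p 1)

/-- Squared Euclidean norm of the gradient, `|∇u|²`. -/
def gradSq {n : ℕ} (u : (Fin n → ℝ) → ℝ) (x : Fin n → ℝ) : ℝ := ∑ p, (pd p u x) ^ 2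

/-- Laplacian `Δu = Σ_p u_{x_p x_p}`. -/
def lap {n : ℕ} (u : (Fin n → ℝ) → ℝ) (x : Fin n → ℝ) : ℝ := ∑ p, pd p (pd p u) x

/-- Surface integral over `Γ_N`: `Σ_p ∫_{[0,1]^{n-1}} h|_{x_p = 1} dx'`
(each face integral realized as an integral over the cube of a function
independent of the `p`-th coordinate). -/
def faceInt {n : ℕ} (h : (Fin n → ℝ) → ℝ) : ℝ :=
  ∑ p : Fin n, ∫ x in cube n, h (Function.update x p 1)

/-- `xᵀ∇u`. -/
def xGrad {n : ℕ} (u : (Fin n → ℝ) → ℝ) (x : Fin n → ℝ) : ℝ := ∑ p, x p * pd p u x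

/-- Minimal eigenvalue of a symmetric matrix, via the Rayleigh quotient. -/
def lamMin (M : Matrix (Fin 3) (Fin 3) ℝ) : ℝ :=
  sInf {r | ∃ v : Fin 3 → ℝ, (∑ i, (v i) ^ 2) = 1 ∧ r = v ⬝ᵥ M.mulVec v}

/-- Maximal eigenvalue of a symmetric matrix, via the Rayleigh quotient. -/
def lamMax (M : Matrix (Fin 3) (Fin 3) ℝ) : ℝ :=
  sSup {r | ∃ v : Fin 3 → ℝ, (∑ i, (v i) ^ 2) = 1 ∧ r = v ⬝ᵥ M.mulVec v}

/-- Negative definiteness. -/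
def NegDefM {m : ℕ} (M : Matrix (Fin m) (Fin m) ℝ) : Prop := (-M).PosDef

/-- Negative semidefiniteness. -/
def NegSemidefM {m : ℕ} (M : Matrix (Fin m) (Fin m) ℝ) : Prop := (-M).PosSemidef

/-- The matrix `Φ₀` of LMI (12). -/
def Phi0 (n : ℕ) (χ lam0 : ℝ) : Matrix (Fin 3) (Fin 3) ℝ :=
  !![1/2 - 4*lam0/(π^2*n), Real.sqrt n * χ, 0;
     Real.sqrt n * χ, 1/2, ((n:ℝ)-1)*χ/2;
     0, ((n:ℝ)-1)*χ/2, lam0]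

/-- `Φ₁ = Φ₀ + diag(4λ₀/(π²n), 0, 0)`. -/
def Phi1 (n : ℕ) (χ lam0 : ℝ) : Matrix (Fin 3) (Fin 3) ℝ :=
  Phi0 n χ lam0 + Matrix.diagonal ![4*lam0/(π^2*n), 0, 0]

/-- The matrix `Ψ₂` of LMI (14). -/
def Psi2 (n : ℕ) (k χ δ g1 lam1 : ℝ) : Matrix (Fin 3) (Fin 3) ℝ :=
  !![-χ + δ*(1 + χ*k*((n:ℝ)-1)) + 4*lam1/(π^2*n), 2*δ*Real.sqrt n*χ, Real.sqrt n*g1*χ;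
     2*δ*Real.sqrt n*χ, -χ + δ, g1/2 + δ*((n:ℝ)-1)*χ;
     Real.sqrt n*g1*χ, g1/2 + δ*((n:ℝ)-1)*χ, -lam1 + g1*((n:ℝ)-1)*χ]

/-- The matrix `Φ` of the exact-observability LMI (32), with `σ = e^{-2δT*}`. -/
def PhiM (n : ℕ) (χ σ lam2 : ℝ) : Matrix (Fin 3) (Fin 3) ℝ :=
  !![-(1-σ)/2 + 4*lam2/(π^2*n), Real.sqrt n*(1+σ)*χ, 0;
     Real.sqrt n*(1+σ)*χ, -(1-σ)/2, ((n:ℝ)-1)*(1+σ)*χ/2;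
     0, ((n:ℝ)-1)*(1+σ)*χ/2, -lam2]

/-- `α = 2λ_min(Φ₀)`. -/
def alphaC (n : ℕ) (χ lam0 : ℝ) : ℝ := 2 * lamMin (Phi0 n χ lam0)

/-- `β = 2(1 + 4/(π²n))λ_max(Φ₁) + χk(n−1)`. -/
def betaC (n : ℕ) (k χ lam0 : ℝ) : ℝ :=
  2 * (1 + 4/(π^2*n)) * lamMax (Phi1 n χ lam0) + χ*k*((n:ℝ)-1)

section Aux


lemma isCompact_cube (n : ℕ) : IsCompact (cube n) :=
  isCompact_univ_pi fun _ => isCompact_Icc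

lemma measurableSet_cube (n : ℕ) : MeasurableSet (cube n) :=
  MeasurableSet.univ_pi fun _ => measurableSet_Icc

lemma continuous_pd {n : ℕ} (p : Fin n) {u : (Fin n → ℝ) → ℝ} (hu : ContDiff ℝ 1 u) :
    Continuous (pd p u) :=
  (hu.continuous_fderiv one_ne_zero).clm_apply continuous_const

lemma continuous_gradSq {n : ℕ} {u : (Fin n → ℝ) → ℝ} (hu : ContDiff ℝ 1 u) :
    Continuous (gradSq u) :=
  continuous_finset_sum _ fun p _ => (continuous_pd p hu).pow 2

lemma continuous_xGrad {n : ℕ} {u : (Fin n → ℝ) → ℝ} (hu : ContDiff ℝ 1 u) :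
    Continuous (xGrad u) :=
  continuous_finset_sum _ fun p _ => ((continuous_apply p).mul (continuous_pd p hu))

lemma integrableOn_cube {n : ℕ} {f : (Fin n → ℝ) → ℝ} (hf : Continuous f) :
    IntegrableOn f (cube n) volume :=
  hf.continuousOn.integrableOn_compact (isCompact_cube n)

-- the product measure
def nu : Measure ℝ := volume.restrict (Set.Icc (0:ℝ) 1)

instance : IsProbabilityMeasure nu := by
  constructor
  simp [nu, Real.volume_Icc]

lemma pi_nu_eq (n : ℕ) :
    Measure.pi (fun _ : Fin n => nu) = volume.restrict (cube n) := by
  refine Measure.pi_eq fun s hs => ?_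
  rw [Measure.restrict_apply (MeasurableSet.univ_pi hs)]
  have : Set.univ.pi s ∩ cube n = Set.univ.pi (fun i => s i ∩ Set.Icc 0 1) := by
    rw [cube, ← Set.pi_inter_distrib]
  rw [this, volume_pi_pi]
  simp [nu, Measure.restrict_apply (hs _)]


section OneD

variable {f : ℝ → ℝ} (hf : ContDiff ℝ 1 f)

/-- trace-type inequality: `f(1)² ≤ ∫₀¹ f'²` for `f(0) = 0`. -/
lemma sq_at_one_le (hf : ContDiff ℝ 1 f) (hf0 : f 0 = 0) :
    f 1 ^ 2 ≤ ∫ t in Set.Icc (0:ℝ) 1, (deriv f t)^2 := by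
  have hd : Continuous (deriv f) := hf.continuous_deriv le_rfl
  have hFTC : ∫ t in (0:ℝ)..1, deriv f t = f 1 - f 0 :=
    intervalIntegral.integral_deriv_eq_sub
      (fun t _ => (hf.differentiable one_ne_zero).differentiableAt)
      (hd.intervalIntegrable _ _)
  set c : ℝ := ∫ t in (0:ℝ)..1, deriv f t with hc
  have hc1 : c = f 1 := by rw [hFTC, hf0, sub_zero]
  have h0 : 0 ≤ ∫ t in (0:ℝ)..1, (deriv f t - c)^2 :=
    intervalIntegral.integral_nonneg (by norm_num) (fun t _ => sq_nonneg _)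
  have hexp : ∫ t in (0:ℝ)..1, (deriv f t - c)^2
      = (∫ t in (0:ℝ)..1, (deriv f t)^2) - c^2 := by
    have h1 : ∫ t in (0:ℝ)..1, (deriv f t - c)^2
        = ∫ t in (0:ℝ)..1, ((deriv f t)^2 - (2*c) * deriv f t + c^2) := by
      congr 1; ext t; ring
    rw [h1, intervalIntegral.integral_add (f := fun t => (deriv f t)^2 - (2*c) * deriv f t) (((hd.pow 2).sub
        (continuous_const.mul hd)).intervalIntegrable _ _)
        (intervalIntegrable_const),
      intervalIntegral.integral_sub (f := fun t => (deriv f t)^2) (g := fun t => (2*c) * deriv f t) ((hd.pow 2).intervalIntegrable _ _)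
        ((continuous_const.mul hd).intervalIntegrable _ _),
      intervalIntegral.integral_const_mul, intervalIntegral.integral_const]
    simp only [← hc, smul_eq_mul]
    ring
  have : c^2 ≤ ∫ t in (0:ℝ)..1, (deriv f t)^2 := by linarith [hexp ▸ h0]
  rw [hc1] at this
  rwa [MeasureTheory.integral_Icc_eq_integral_Ioc,
    ← intervalIntegral.integral_of_le (by norm_num : (0:ℝ) ≤ 1)]

end OneD

section Poincare

variable {f : ℝ → ℝ}

private def phi (t : ℝ) : ℝ := (π/2) * (Real.cos (π*t/2) / Real.sin (π*t/2))

private lemma sin_pos_aux {t : ℝ} (ht0 : 0 < t) (ht1 : t ≤ 1) : 0 < Real.sin (π*t/2) := by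
  apply Real.sin_pos_of_pos_of_lt_pi
  · positivity
  · nlinarith [Real.pi_pos]

private lemma hasDerivAt_phi {t : ℝ} (ht0 : 0 < t) (ht1 : t ≤ 1) :
    HasDerivAt phi (-(π^2/4) - phi t^2) t := by
  have hs := sin_pos_aux ht0 ht1
  have hu : HasDerivAt (fun t : ℝ => π*t/2) (π/2) t := by
    simpa using ((hasDerivAt_id t).const_mul π).div_const 2
  have hcos : HasDerivAt (fun t : ℝ => Real.cos (π*t/2))
      (-Real.sin (π*t/2) * (π/2)) t := (Real.hasDerivAt_cos _).comp t hu
  have hsin : HasDerivAt (fun t : ℝ => Real.sin (π*t/2))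
      (Real.cos (π*t/2) * (π/2)) t := (Real.hasDerivAt_sin _).comp t hu
  have hdiv := (hcos.div hsin hs.ne')
  have : HasDerivAt (fun y => π/2 * (Real.cos (π*y/2) / Real.sin (π*y/2))) _ t :=
    hdiv.const_mul (π/2)
  convert this using 1
  · rfl
  have hpyth := Real.sin_sq_add_cos_sq (π*t/2)
  rw [phi]
  field_simp
  nlinarith [hpyth]

private lemma phi_one : phi 1 = 0 := by
  rw [phi, mul_one, Real.cos_pi_div_two]
  simp

private lemma continuousOn_phi {ε : ℝ} (hε : 0 < ε) :
    ContinuousOn phi (Set.Icc ε 1) := by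
  apply ContinuousOn.mul continuousOn_const
  apply ContinuousOn.div
  · exact (Real.continuous_cos.comp (by continuity)).continuousOn
  · exact (Real.continuous_sin.comp (by continuity)).continuousOn
  · exact fun t ht => (sin_pos_aux (lt_of_lt_of_le hε ht.1) ht.2).ne'

set_option maxHeartbeats 1000000 in
/-- The ε-truncated Wirtinger estimate. -/
private lemma eps_step (hf : ContDiff ℝ 1 f) {ε : ℝ} (hε0 : 0 < ε) (hε1 : ε ≤ 1) :
    (π^2/4) * (∫ t in ε..1, f t^2) ≤ (∫ t in ε..1, (deriv f t)^2) + phi ε * f ε^2 := by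
  set d := deriv f with hdd
  have hd : Continuous d := hf.continuous_deriv le_rfl
  have hfc : Continuous f := hf.continuous
  have hfd : ∀ t, HasDerivAt f (d t) t :=
    fun t => ((hf.differentiable one_ne_zero) t).hasDerivAt
  have huIcc : Set.uIcc ε 1 = Set.Icc ε 1 := Set.uIcc_of_le hε1
  have hφcont : ContinuousOn phi (Set.Icc ε 1) := continuousOn_phi hε0
  have hφ'cont : ContinuousOn (fun t => -(π^2/4) - phi t^2) (Set.Icc ε 1) :=
    continuousOn_const.sub (hφcont.pow 2)
  -- integration by parts
  have hf2d : ∀ t, HasDerivAt (fun s => f s^2) (2*f t*d t) t := by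
    intro t
    have : HasDerivAt (fun s => f s^2) _ t := (hfd t).pow 2
    convert this using 1
    ring
  have ibp : ∫ t in ε..1, phi t * (2*f t*d t)
      = phi 1 * f 1^2 - phi ε * f ε^2
        - ∫ t in ε..1, (-(π^2/4) - phi t^2) * f t^2 := by
    refine intervalIntegral.integral_mul_deriv_eq_deriv_mul
      (u := phi) (u' := fun t => -(π^2/4) - phi t^2)
      (v := fun t => f t^2) (v' := fun t => 2*f t*d t) ?_ ?_ ?_ ?_
    · intro t ht
      rw [huIcc] at ht
      exact hasDerivAt_phi (lt_of_lt_of_le hε0 ht.1) ht.2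
    · intro t _
      exact hf2d t
    · exact (hφ'cont.mono (by rw [huIcc])).intervalIntegrable
    · exact ((continuous_const.mul hfc).mul hd).intervalIntegrable _ _
  -- integrability of the pieces
  have hint1 : IntervalIntegrable (fun t => d t^2) volume ε 1 :=
    ((hd.pow 2)).intervalIntegrable _ _
  have hint2 : IntervalIntegrable (fun t => phi t * (2*f t*d t)) volume ε 1 := by
    apply ContinuousOn.intervalIntegrable
    rw [huIcc]
    exact hφcont.mul ((continuous_const.mul hfc).mul hd).continuousOn
  have hint3 : IntervalIntegrable (fun t => phi t^2 * f t^2) volume ε 1 := by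
    apply ContinuousOn.intervalIntegrable
    rw [huIcc]
    exact (hφcont.pow 2).mul (hfc.pow 2).continuousOn
  have hint4 : IntervalIntegrable (fun t => f t^2) volume ε 1 :=
    (hfc.pow 2).intervalIntegrable _ _
  -- expansion of the square
  have hsq : 0 ≤ ∫ t in ε..1, (d t - phi t * f t)^2 :=
    intervalIntegral.integral_nonneg hε1 (fun t _ => sq_nonneg _)
  have hexp : ∫ t in ε..1, (d t - phi t * f t)^2
      = (∫ t in ε..1, d t^2) - (∫ t in ε..1, phi t * (2*f t*d t))
        + ∫ t in ε..1, phi t^2 * f t^2 := by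
    rw [← intervalIntegral.integral_sub hint1 hint2,
      ← intervalIntegral.integral_add (hint1.sub hint2) hint3]
    apply intervalIntegral.integral_congr
    intro t _
    ring
  -- expansion of ∫ (-(π²/4) - φ²) f²
  have hint5 : IntervalIntegrable (fun t => (-(π^2/4) - phi t^2) * f t^2) volume ε 1 := by
    apply ContinuousOn.intervalIntegrable
    rw [huIcc]
    exact hφ'cont.mul (hfc.pow 2).continuousOn
  have hexp2 : (∫ t in ε..1, (π^2/4) * f t^2)
      + (∫ t in ε..1, (-(π^2/4) - phi t^2) * f t^2)
      = - ∫ t in ε..1, phi t^2 * f t^2 := by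
    rw [← intervalIntegral.integral_add (hint4.const_mul _) hint5,
      ← intervalIntegral.integral_neg]
    apply intervalIntegral.integral_congr
    intro t _
    ring
  have hconst : (∫ t in ε..1, (π^2/4) * f t^2)
      = (π^2/4) * ∫ t in ε..1, f t^2 := intervalIntegral.integral_const_mul _ _
  rw [hexp, ibp, phi_one] at hsq
  linarith [hsq, hexp2, hconst]

set_option maxHeartbeats 1000000 in
/-- 1D Poincaré with sharp constant. -/
lemma poincare_1d (hf : ContDiff ℝ 1 f) (hf0 : f 0 = 0) :
    ∫ t in Set.Icc (0:ℝ) 1, (f t)^2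
      ≤ (4/π^2) * ∫ t in Set.Icc (0:ℝ) 1, (deriv f t)^2 := by
  set d := deriv f with hdd
  have hd : Continuous d := hf.continuous_deriv le_rfl
  have hfc : Continuous f := hf.continuous
  set A : ℝ := ∫ t in (0:ℝ)..1, f t^2 with hA
  set B : ℝ := ∫ t in (0:ℝ)..1, d t^2 with hB
  -- bounds on f and d over [0,1]
  obtain ⟨Cf, hCf⟩ := isCompact_Icc.exists_bound_of_continuousOn
    (f := f) (s := Set.Icc (0:ℝ) 1) hfc.continuousOn
  obtain ⟨Cd, hCd⟩ := isCompact_Icc.exists_bound_of_continuousOn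
    (f := d) (s := Set.Icc (0:ℝ) 1) hd.continuousOn
  have hCf0 : 0 ≤ Cf := le_trans (norm_nonneg _) (hCf 0 (by norm_num))
  have hCd0 : 0 ≤ Cd := le_trans (norm_nonneg _) (hCd 0 (by norm_num))
  set K : ℝ := (π^2/4) * Cf^2 + (π/2) * Cd^2 with hK
  have hK0 : 0 ≤ K := by positivity
  -- main estimate for each ε
  have main : ∀ ε : ℝ, 0 < ε → ε ≤ 1 → (π^2/4) * A ≤ B + K * ε := by
    intro ε hε0 hε1
    have hadj1 : (∫ t in (0:ℝ)..ε, f t^2) + (∫ t in ε..1, f t^2) = A :=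
      intervalIntegral.integral_add_adjacent_intervals
        ((hfc.pow 2).intervalIntegrable _ _) ((hfc.pow 2).intervalIntegrable _ _)
    have hadj2 : (∫ t in (0:ℝ)..ε, d t^2) + (∫ t in ε..1, d t^2) = B :=
      intervalIntegral.integral_add_adjacent_intervals
        ((hd.pow 2).intervalIntegrable _ _) ((hd.pow 2).intervalIntegrable _ _)
    -- |f ε| ≤ Cd ε
    have hfeps : |f ε| ≤ Cd * ε := by
      have hFTC : ∫ t in (0:ℝ)..ε, d t = f ε - f 0 :=
        intervalIntegral.integral_deriv_eq_sub
          (fun t _ => (hf.differentiable one_ne_zero).differentiableAt)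
          (hd.intervalIntegrable _ _)
      have hb : ‖∫ t in (0:ℝ)..ε, d t‖ ≤ Cd * |ε - 0| := by
        apply intervalIntegral.norm_integral_le_of_norm_le_const
        intro t ht
        rw [Set.uIoc_of_le hε0.le] at ht
        exact hCd t ⟨ht.1.le, le_trans ht.2 hε1⟩
      rw [hFTC, hf0, sub_zero] at hb
      simpa [abs_of_pos hε0] using hb
    -- ∫₀^ε f² ≤ Cf² ε
    have hsmall : ∫ t in (0:ℝ)..ε, f t^2 ≤ Cf^2 * ε := by
      have hb : ‖∫ t in (0:ℝ)..ε, f t^2‖ ≤ Cf^2 * |ε - 0| := by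
        apply intervalIntegral.norm_integral_le_of_norm_le_const
        intro t ht
        rw [Set.uIoc_of_le hε0.le] at ht
        have := hCf t ⟨ht.1.le, le_trans ht.2 hε1⟩
        rw [Real.norm_eq_abs] at this ⊢
        rw [abs_of_nonneg (sq_nonneg _)]
        nlinarith [abs_nonneg (f t), sq_abs (f t)]
      calc ∫ t in (0:ℝ)..ε, f t^2 ≤ ‖∫ t in (0:ℝ)..ε, f t^2‖ := le_abs_self _
        _ ≤ Cf^2 * |ε - 0| := hb
        _ = Cf^2 * ε := by rw [sub_zero, abs_of_pos hε0]
    -- ∫₀^ε d² ≥ 0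
    have hd0 : 0 ≤ ∫ t in (0:ℝ)..ε, d t^2 :=
      intervalIntegral.integral_nonneg hε0.le (fun t _ => sq_nonneg _)
    -- φ ε f ε² ≤ (π/2) Cd² ε
    have hsin := sin_pos_aux hε0 hε1
    have hsinge : ε ≤ Real.sin (π*ε/2) := by
      have := Real.mul_le_sin (x := π*ε/2) (by positivity)
        (by nlinarith [Real.pi_pos])
      calc ε = 2/π * (π*ε/2) := by field_simp
        _ ≤ Real.sin (π*ε/2) := this
    have hφle : phi ε ≤ (π/2) / ε := by
      rw [phi]
      have hcos1 : Real.cos (π*ε/2) ≤ 1 := Real.cos_le_one _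
      have : Real.cos (π*ε/2) / Real.sin (π*ε/2) ≤ 1 / ε :=
        div_le_div₀ zero_le_one hcos1 hε0 hsinge
      calc (π/2) * (Real.cos (π*ε/2) / Real.sin (π*ε/2)) ≤ (π/2) * (1/ε) :=
            mul_le_mul_of_nonneg_left this (by positivity)
        _ = (π/2)/ε := by ring
    have hφ0 : 0 ≤ phi ε := by
      rw [phi]
      have hcos0 : 0 ≤ Real.cos (π*ε/2) := by
        apply Real.cos_nonneg_of_mem_Icc
        constructor
        · nlinarith [Real.pi_pos]
        · nlinarith [Real.pi_pos]
      positivity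
    have hφf : phi ε * f ε^2 ≤ (π/2) * Cd^2 * ε := by
      have hf2 : f ε^2 ≤ (Cd*ε)^2 := by
        nlinarith [abs_nonneg (f ε), sq_abs (f ε), hfeps]
      calc phi ε * f ε^2 ≤ ((π/2)/ε) * (Cd*ε)^2 := by
            apply mul_le_mul hφle hf2 (sq_nonneg _)
            positivity
        _ = (π/2) * Cd^2 * ε := by field_simp
    have hstep := eps_step hf hε0 hε1
    rw [← hdd] at hstep
    -- combine
    have e0 : (π^2/4)*A = (π^2/4)*(∫ t in (0:ℝ)..ε, f t^2)
        + (π^2/4)*(∫ t in ε..1, f t^2) := by rw [← hadj1]; ring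
    have e1 : (π^2/4)*(∫ t in (0:ℝ)..ε, f t^2) ≤ (π^2/4)*(Cf^2*ε) :=
      mul_le_mul_of_nonneg_left hsmall (by positivity)
    have h2 : (∫ t in ε..1, d t^2) ≤ B := by linarith [hadj2, hd0]
    have eK : K*ε = (π^2/4)*(Cf^2*ε) + (π/2)*Cd^2*ε := by rw [hK]; ring
    linarith [e0, e1, h2, hstep, hφf, eK]
  -- take ε → 0
  have hAB : (π^2/4) * A ≤ B := by
    apply le_of_forall_pos_le_add
    intro δ hδ
    set ε : ℝ := min 1 (δ/(K+1)) with hε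
    have hε0 : 0 < ε := lt_min one_pos (by positivity)
    have hε1 : ε ≤ 1 := min_le_left _ _
    have hKε : K * ε ≤ δ := by
      have h1 : ε ≤ δ/(K+1) := min_le_right _ _
      have h2 : K * ε ≤ K * (δ/(K+1)) := mul_le_mul_of_nonneg_left h1 hK0
      have h3 : K * (δ/(K+1)) ≤ δ := by
        have hKp : (0:ℝ) < K+1 := by linarith
        rw [show K * (δ/(K+1)) = δ*K/(K+1) by ring, div_le_iff₀ hKp]
        nlinarith [hδ.le, hK0]
      exact le_trans h2 h3
    exact (main ε hε0 hε1).trans (add_le_add_right hKε B)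
  -- conclude
  have hIcc1 : ∫ t in Set.Icc (0:ℝ) 1, f t^2 = A := by
    rw [hA, MeasureTheory.integral_Icc_eq_integral_Ioc,
      ← intervalIntegral.integral_of_le (by norm_num : (0:ℝ) ≤ 1)]
  have hIcc2 : ∫ t in Set.Icc (0:ℝ) 1, (deriv f t)^2 = B := by
    rw [hB, MeasureTheory.integral_Icc_eq_integral_Ioc,
      ← intervalIntegral.integral_of_le (by norm_num : (0:ℝ) ≤ 1)]
  rw [hIcc1, hIcc2]
  have hπ : (0:ℝ) < π^2 := by positivity
  rw [div_mul_eq_mul_div, le_div_iff₀ hπ]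
  nlinarith [hAB]

end Poincare

open Function in
/-- Fubini-type comparison over the cube via line integrals in direction `p`. -/
lemma cube_compare {n : ℕ} (p : Fin n) {F G : (Fin n → ℝ) → ℝ}
    (hF : Continuous F) (hG : Continuous G)
    (hF0 : ∀ x, 0 ≤ F x) (hG0 : ∀ x, 0 ≤ G x)
    (hline : ∀ x : Fin n → ℝ, (∀ q, q ≠ p → x q ∈ Set.Icc (0:ℝ) 1) →
      (∫ t in Set.Icc (0:ℝ) 1, F (update x p t))
        ≤ ∫ t in Set.Icc (0:ℝ) 1, G (update x p t)) :
    (∫ x in cube n, F x) ≤ ∫ x in cube n, G x := by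
  classical
  set Fe : (Fin n → ℝ) → ENNReal :=
    (cube n).indicator (fun y => ENNReal.ofReal (F y)) with hFe
  set Ge : (Fin n → ℝ) → ENNReal :=
    (cube n).indicator (fun y => ENNReal.ofReal (G y)) with hGe
  have hFem : Measurable Fe :=
    (ENNReal.measurable_ofReal.comp hF.measurable).indicator (measurableSet_cube n)
  have hGem : Measurable Ge :=
    (ENNReal.measurable_ofReal.comp hG.measurable).indicator (measurableSet_cube n)
  -- the marginal comparison
  have marg : (∫⋯∫⁻_{p}, Fe ∂(fun _ => nu)) ≤ ∫⋯∫⁻_{p}, Ge ∂(fun _ => nu) := by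
    intro x
    rw [lmarginal_singleton, lmarginal_singleton]
    show (∫⁻ t, Fe (update x p t) ∂nu) ≤ ∫⁻ t, Ge (update x p t) ∂nu
    by_cases hx : ∀ q, q ≠ p → x q ∈ Set.Icc (0:ℝ) 1
    · have hmem : ∀ t ∈ Set.Icc (0:ℝ) 1, update x p t ∈ cube n := by
        intro t ht q _
        rcases eq_or_ne q p with rfl | hq
        · simpa using ht
        · rw [update_of_ne hq]
          exact hx q hq
      have eq1 : ∫⁻ t, Fe (update x p t) ∂nu
          = ENNReal.ofReal (∫ t in Set.Icc (0:ℝ) 1, F (update x p t)) := by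
        rw [nu]
        rw [setLIntegral_congr_fun measurableSet_Icc
          (fun t ht => by
            rw [hFe, Set.indicator_of_mem (hmem t ht)])]
        exact (ofReal_integral_eq_lintegral_ofReal
          ((hF.comp (continuous_const.update p continuous_id)).continuousOn.integrableOn_compact
            isCompact_Icc)
          (ae_of_all _ (fun t => hF0 _))).symm
      have eq2 : ∫⁻ t, Ge (update x p t) ∂nu
          = ENNReal.ofReal (∫ t in Set.Icc (0:ℝ) 1, G (update x p t)) := by
        rw [nu]
        rw [setLIntegral_congr_fun measurableSet_Icc
          (fun t ht => by
            rw [hGe, Set.indicator_of_mem (hmem t ht)])]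
        exact (ofReal_integral_eq_lintegral_ofReal
          ((hG.comp (continuous_const.update p continuous_id)).continuousOn.integrableOn_compact
            isCompact_Icc)
          (ae_of_all _ (fun t => hG0 _))).symm
      rw [eq1, eq2]
      exact ENNReal.ofReal_le_ofReal (hline x hx)
    · push_neg at hx
      obtain ⟨q, hq, hxq⟩ := hx
      have : ∀ t, update x p t ∉ cube n := by
        intro t hmem
        exact hxq (by simpa [update_of_ne hq] using hmem q (Set.mem_univ q))
      have : ∀ t, Fe (update x p t) = 0 := fun t => Set.indicator_of_notMem (this t) _
      simp only [this]
      simp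
  -- full comparison of lintegrals
  have full : ∫⁻ x, Fe x ∂(Measure.pi fun _ : Fin n => nu)
      ≤ ∫⁻ x, Ge x ∂(Measure.pi fun _ : Fin n => nu) :=
    lintegral_le_of_lmarginal_le {p} hFem hGem marg
  rw [pi_nu_eq] at full
  have hre : ∀ (H : (Fin n → ℝ) → ℝ), Continuous H →
      ∫⁻ x, (cube n).indicator (fun y => ENNReal.ofReal (H y)) x ∂(volume.restrict (cube n))
        = ∫⁻ x, ENNReal.ofReal (H x) ∂(volume.restrict (cube n)) := by
    intro H hH
    rw [lintegral_indicator (measurableSet_cube n),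
      Measure.restrict_restrict (measurableSet_cube n), Set.inter_self]
  rw [hFe, hGe, hre F hF, hre G hG] at full
  have eF : ENNReal.ofReal (∫ x in cube n, F x)
      = ∫⁻ x, ENNReal.ofReal (F x) ∂(volume.restrict (cube n)) :=
    ofReal_integral_eq_lintegral_ofReal (integrableOn_cube hF) (ae_of_all _ hF0)
  have eG : ENNReal.ofReal (∫ x in cube n, G x)
      = ∫⁻ x, ENNReal.ofReal (G x) ∂(volume.restrict (cube n)) :=
    ofReal_integral_eq_lintegral_ofReal (integrableOn_cube hG) (ae_of_all _ hG0)
  rw [← eF, ← eG] at full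
  have h1 : 0 ≤ ∫ x in cube n, G x := setIntegral_nonneg (measurableSet_cube n) (fun x _ => hG0 x)
  have h2 : 0 ≤ ∫ x in cube n, F x := setIntegral_nonneg (measurableSet_cube n) (fun x _ => hF0 x)
  exact (ENNReal.ofReal_le_ofReal_iff h1).mp full


section Cube

variable {n : ℕ} {e : (Fin n → ℝ) → ℝ}

open Function in
private lemma line_props (he : ContDiff ℝ 1 e) (p : Fin n) (x : Fin n → ℝ) :
    ContDiff ℝ 1 (fun t : ℝ => e (update x p t)) ∧
      ∀ t : ℝ, deriv (fun t : ℝ => e (update x p t)) t = pd p e (update x p t) := by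
  have hupd : ∀ t : ℝ, update x p t = update x p 0 + t • (Pi.single p 1 : Fin n → ℝ) := by
    intro t
    funext q
    rcases eq_or_ne q p with rfl | hq
    · simp
    · simp [update_of_ne hq, Pi.single_eq_of_ne hq]
  have hl : ContDiff ℝ 1 (fun t : ℝ => update x p 0 + t • (Pi.single p 1 : Fin n → ℝ)) :=
    contDiff_const.add (contDiff_id.smul contDiff_const)
  have hcomp : ContDiff ℝ 1 (fun t : ℝ => e (update x p t)) := by
    rw [show (fun t : ℝ => e (update x p t))
        = fun t : ℝ => e (update x p 0 + t • (Pi.single p 1 : Fin n → ℝ)) from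
      funext fun t => congrArg e (hupd t)]
    exact he.comp hl
  refine ⟨hcomp, fun t => ?_⟩
  have h1 : HasDerivAt (fun s : ℝ => update x p 0 + s • (Pi.single p 1 : Fin n → ℝ))
      (Pi.single p 1) t := by
    have := ((hasDerivAt_id t).smul_const (Pi.single p (1:ℝ))).const_add (update x p 0)
    rw [one_smul] at this
    exact this
  have hfun : (update x p : ℝ → (Fin n → ℝ))
      = fun s => update x p 0 + s • (Pi.single p 1 : Fin n → ℝ) := funext hupd
  have h1' : HasDerivAt (update x p : ℝ → (Fin n → ℝ)) (Pi.single p 1) t := by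
    rw [hfun]; exact h1
  have h3 := (((he.differentiable one_ne_zero) (update x p t)).hasFDerivAt).comp_hasDerivAt t h1'
  exact h3.deriv

open Function in
lemma poincare_dir (he : ContDiff ℝ 1 e)
    (hD : ∀ x ∈ cube n, (∃ p, x p = 0) → e x = 0) (p : Fin n) :
    (∫ x in cube n, (e x)^2) ≤ ∫ x in cube n, (4/π^2) * (pd p e x)^2 := by
  apply cube_compare p (he.continuous.pow 2)
    (continuous_const.mul ((continuous_pd p he).pow 2))
    (fun x => sq_nonneg _) (fun x => mul_nonneg (by positivity) (sq_nonneg _))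
  intro x hx
  obtain ⟨hfc, hfd⟩ := line_props he p x
  have hf0 : e (update x p 0) = 0 := by
    apply hD
    · intro q _
      rcases eq_or_ne q p with rfl | hq
      · simp
      · rw [update_of_ne hq]; exact hx q hq
    · exact ⟨p, by simp⟩
  have hpoin := poincare_1d hfc hf0
  calc ∫ t in Set.Icc (0:ℝ) 1, (e (update x p t))^2
      ≤ (4/π^2) * ∫ t in Set.Icc (0:ℝ) 1, (deriv (fun t => e (update x p t)) t)^2 := hpoin
    _ = (4/π^2) * ∫ t in Set.Icc (0:ℝ) 1, (pd p e (update x p t))^2 := by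
        rw [setIntegral_congr_fun measurableSet_Icc
          (fun t _ => by simp only [hfd t] : Set.EqOn (fun t => (deriv (fun t => e (update x p t)) t)^2)
            (fun t => (pd p e (update x p t))^2) (Set.Icc 0 1))]
    _ = ∫ t in Set.Icc (0:ℝ) 1, (4/π^2) * (pd p e (update x p t))^2 :=
        (integral_const_mul _ _).symm

open Function in
lemma trace_dir (he : ContDiff ℝ 1 e)
    (hD : ∀ x ∈ cube n, (∃ p, x p = 0) → e x = 0) (p : Fin n) :
    (∫ x in cube n, (e (update x p 1))^2) ≤ ∫ x in cube n, (pd p e x)^2 := by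
  apply cube_compare p ((he.continuous.comp (continuous_id.update p continuous_const)).pow 2)
    ((continuous_pd p he).pow 2)
    (fun x => sq_nonneg _) (fun x => sq_nonneg _)
  intro x hx
  obtain ⟨hfc, hfd⟩ := line_props he p x
  have hf0 : e (update x p 0) = 0 := by
    apply hD
    · intro q _
      rcases eq_or_ne q p with rfl | hq
      · simp
      · rw [update_of_ne hq]; exact hx q hq
    · exact ⟨p, by simp⟩
  have key := sq_at_one_le hfc hf0
  calc ∫ t in Set.Icc (0:ℝ) 1, (e (update (update x p t) p 1))^2
      = ∫ t in Set.Icc (0:ℝ) 1, (e (update x p 1))^2 := by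
        apply setIntegral_congr_fun measurableSet_Icc
        intro t _
        simp [Function.update_idem]
    _ = (e (update x p 1))^2 := by
        rw [setIntegral_const]
        simp [Real.volume_Icc]
    _ ≤ ∫ t in Set.Icc (0:ℝ) 1, (deriv (fun t => e (update x p t)) t)^2 := key
    _ = ∫ t in Set.Icc (0:ℝ) 1, (pd p e (update x p t))^2 := by
        apply setIntegral_congr_fun measurableSet_Icc
        intro t _
        simp only [hfd t]

end Cube


namespace Ray

def S (M : Matrix (Fin 3) (Fin 3) ℝ) : Set ℝ :=
  {r | ∃ v : Fin 3 → ℝ, (∑ i, (v i) ^ 2) = 1 ∧ r = v ⬝ᵥ M.mulVec v}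

lemma nonempty (M : Matrix (Fin 3) (Fin 3) ℝ) : (S M).Nonempty := by
  refine ⟨_, ![1,0,0], by simp [Fin.sum_univ_three], rfl⟩

lemma abs_le (M : Matrix (Fin 3) (Fin 3) ℝ) {r : ℝ} (hr : r ∈ S M) :
    |r| ≤ ∑ i, ∑ j, |M i j| := by
  obtain ⟨v, hv, rfl⟩ := hr
  have hv1 : ∀ i, |v i| ≤ 1 := by
    intro i
    have h1 : (v i)^2 ≤ 1 := hv ▸ Finset.single_le_sum (f := fun i => (v i)^2)
      (fun j _ => sq_nonneg _) (Finset.mem_univ i)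
    nlinarith [abs_nonneg (v i), sq_abs (v i)]
  calc |v ⬝ᵥ M.mulVec v| ≤ ∑ i, |v i * (M.mulVec v) i| := Finset.abs_sum_le_sum_abs _ _
    _ ≤ ∑ i, ∑ j, |M i j| := by
        refine Finset.sum_le_sum fun i _ => ?_
        rw [abs_mul, Matrix.mulVec, dotProduct]
        calc |v i| * |∑ j, M i j * v j| ≤ 1 * ∑ j, |M i j * v j| :=
              mul_le_mul (hv1 i) (Finset.abs_sum_le_sum_abs _ _) (abs_nonneg _) zero_le_one
          _ ≤ ∑ j, |M i j| := by
              rw [one_mul]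
              refine Finset.sum_le_sum fun j _ => ?_
              rw [abs_mul]
              calc |M i j| * |v j| ≤ |M i j| * 1 :=
                    mul_le_mul_of_nonneg_left (hv1 j) (abs_nonneg _)
                _ = |M i j| := mul_one _

lemma bddBelow (M : Matrix (Fin 3) (Fin 3) ℝ) : BddBelow (S M) :=
  ⟨-(∑ i, ∑ j, |M i j|), fun r hr => neg_le_of_abs_le (abs_le M hr)⟩

lemma bddAbove (M : Matrix (Fin 3) (Fin 3) ℝ) : BddAbove (S M) :=
  ⟨∑ i, ∑ j, |M i j|, fun r hr => le_of_abs_le (abs_le M hr)⟩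

lemma smul_quad (M : Matrix (Fin 3) (Fin 3) ℝ) (c : ℝ) (y : Fin 3 → ℝ) :
    (c • y) ⬝ᵥ M.mulVec (c • y) = c^2 * (y ⬝ᵥ M.mulVec y) := by
  rw [Matrix.mulVec_smul, dotProduct_smul, smul_dotProduct,
    smul_eq_mul, smul_eq_mul]
  ring

end Ray

lemma lamMin_mul_le (M : Matrix (Fin 3) (Fin 3) ℝ) (y : Fin 3 → ℝ) :
    lamMin M * (∑ i, (y i)^2) ≤ y ⬝ᵥ M.mulVec y := by
  rcases eq_or_ne y 0 with rfl | hy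
  · simp
  · set c : ℝ := Real.sqrt (∑ i, (y i)^2) with hc
    have hpos : 0 < ∑ i, (y i)^2 := by
      have : ∃ i, y i ≠ 0 := by
        by_contra h
        push_neg at h
        exact hy (funext h)
      obtain ⟨i, hi⟩ := this
      exact Finset.sum_pos' (fun j _ => sq_nonneg _)
        ⟨i, Finset.mem_univ i, by positivity⟩
    have hcpos : 0 < c := Real.sqrt_pos.mpr hpos
    have hc2 : c^2 = ∑ i, (y i)^2 := Real.sq_sqrt hpos.le
    have hmem : (c⁻¹ • y) ⬝ᵥ M.mulVec (c⁻¹ • y) ∈ Ray.S M := by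
      refine ⟨c⁻¹ • y, ?_, rfl⟩
      have : ∑ i, (c⁻¹ * y i)^2 = c⁻¹^2 * ∑ i, (y i)^2 := by
        rw [Finset.mul_sum]; congr 1; ext i; ring
      simp only [Pi.smul_apply, smul_eq_mul, this, hc2]
      rw [hc2.symm]
      field_simp
    have h1 : lamMin M ≤ c⁻¹^2 * (y ⬝ᵥ M.mulVec y) := by
      have := csInf_le (Ray.bddBelow M) hmem
      rwa [Ray.smul_quad] at this
    have := mul_le_mul_of_nonneg_right h1 (le_of_lt (by positivity : (0:ℝ) < c^2))
    calc lamMin M * (∑ i, (y i)^2) = lamMin M * c^2 := by rw [hc2]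
      _ ≤ c⁻¹^2 * (y ⬝ᵥ M.mulVec y) * c^2 := by linarith [this]
      _ = y ⬝ᵥ M.mulVec y := by field_simp
      
lemma quad_le_lamMax_mul (M : Matrix (Fin 3) (Fin 3) ℝ) (y : Fin 3 → ℝ) :
    y ⬝ᵥ M.mulVec y ≤ lamMax M * (∑ i, (y i)^2) := by
  rcases eq_or_ne y 0 with rfl | hy
  · simp
  · set c : ℝ := Real.sqrt (∑ i, (y i)^2) with hc
    have hpos : 0 < ∑ i, (y i)^2 := by
      have : ∃ i, y i ≠ 0 := by
        by_contra h
        push_neg at h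
        exact hy (funext h)
      obtain ⟨i, hi⟩ := this
      exact Finset.sum_pos' (fun j _ => sq_nonneg _)
        ⟨i, Finset.mem_univ i, by positivity⟩
    have hcpos : 0 < c := Real.sqrt_pos.mpr hpos
    have hc2 : c^2 = ∑ i, (y i)^2 := Real.sq_sqrt hpos.le
    have hmem : (c⁻¹ • y) ⬝ᵥ M.mulVec (c⁻¹ • y) ∈ Ray.S M := by
      refine ⟨c⁻¹ • y, ?_, rfl⟩
      have : ∑ i, (c⁻¹ * y i)^2 = c⁻¹^2 * ∑ i, (y i)^2 := by
        rw [Finset.mul_sum]; congr 1; ext i; ring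
      simp only [Pi.smul_apply, smul_eq_mul, this, hc2]
      rw [hc2.symm]
      field_simp
    have h1 : c⁻¹^2 * (y ⬝ᵥ M.mulVec y) ≤ lamMax M := by
      have := le_csSup (Ray.bddAbove M) hmem
      rwa [Ray.smul_quad] at this
    have := mul_le_mul_of_nonneg_right h1 (le_of_lt (by positivity : (0:ℝ) < c^2))
    calc y ⬝ᵥ M.mulVec y = c⁻¹^2 * (y ⬝ᵥ M.mulVec y) * c^2 := by field_simp
      _ ≤ lamMax M * c^2 := this
      _ = lamMax M * (∑ i, (y i)^2) := by rw [hc2]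

lemma lamMin_nonneg {M : Matrix (Fin 3) (Fin 3) ℝ} (hM : M.PosDef) : 0 ≤ lamMin M := by
  refine le_csInf (Ray.nonempty M) ?_
  rintro r ⟨v, hv, rfl⟩
  have hv0 : v ≠ 0 := by
    intro h
    rw [h] at hv
    simp at hv
  have := hM.dotProduct_mulVec_pos hv0
  simpa using this.le

lemma half_le_lamMax_Phi1 (n : ℕ) (χ lam0 : ℝ) : (1/2:ℝ) ≤ lamMax (Phi1 n χ lam0) := by
  apply le_csSup (Ray.bddAbove _)
  refine ⟨![0,1,0], by simp [Fin.sum_univ_three], ?_⟩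
  simp [Phi1, Phi0, Matrix.mulVec, dotProduct, Fin.sum_univ_three,
    Matrix.diagonal, Matrix.add_apply]

lemma quad_lower (n : ℕ) (hn : 1 ≤ n) (χ lam0 : ℝ) (hχ : 0 ≤ χ)
    (hmin : 0 ≤ lamMin (Phi0 n χ lam0))
    (g w c xg : ℝ) (hg : 0 ≤ g) (hxg : |xg| ≤ Real.sqrt n * Real.sqrt g) :
    lamMin (Phi0 n χ lam0) * (g + w^2)
      ≤ (1/2 - 4*lam0/(π^2*n))*g + (1/2)*w^2 + lam0*c^2
        + χ*((2*xg + ((n:ℝ)-1)*c)*w) := by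
  have hnm1 : (0:ℝ) ≤ (n:ℝ) - 1 := by
    have : (1:ℝ) ≤ (n:ℝ) := by exact_mod_cast hn
    linarith
  have key := lamMin_mul_le (Phi0 n χ lam0) ![Real.sqrt g, -|w|, |c|]
  have hsum : (∑ i : Fin 3, ((![Real.sqrt g, -|w|, |c|] : Fin 3 → ℝ) i) ^2) = g + w^2 + c^2 := by
    simp [Fin.sum_univ_three, Real.sq_sqrt hg, sq_abs]
  have hquad : (![Real.sqrt g, -|w|, |c|] : Fin 3 → ℝ)
        ⬝ᵥ (Phi0 n χ lam0).mulVec ![Real.sqrt g, -|w|, |c|]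
      = (1/2 - 4*lam0/(π^2*n))*g + (1/2)*w^2 + lam0*c^2
        - 2*(Real.sqrt n * χ)*(Real.sqrt g*|w|) - ((n:ℝ)-1)*χ*(|w| * |c|) := by
    simp [Phi0, Matrix.mulVec, dotProduct, Fin.sum_univ_three]
    linear_combination (1/2 - 4*lam0/(π^2*(n:ℝ))) * Real.mul_self_sqrt hg
      + (1/2) * abs_mul_abs_self w + lam0 * abs_mul_abs_self c
  rw [hsum, hquad] at key
  have e1 : -(Real.sqrt n * Real.sqrt g * |w|) ≤ xg*w := by
    have h1 := neg_abs_le (xg*w)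
    rw [abs_mul] at h1
    nlinarith [abs_nonneg w, abs_nonneg xg]
  have e2 : -(|w| * |c|) ≤ c*w := by
    have h1 := neg_abs_le (c*w)
    rw [abs_mul, mul_comm] at h1
    linarith
  have e1' := mul_le_mul_of_nonneg_left e1 (by linarith : (0:ℝ) ≤ 2*χ)
  have e2' := mul_le_mul_of_nonneg_left e2 (mul_nonneg hnm1 hχ)
  have hL := mul_le_mul_of_nonneg_left (sq_nonneg c) hmin
  nlinarith [key, e1', e2', hL]

lemma quad_upper (n : ℕ) (hn : 1 ≤ n) (χ lam0 : ℝ) (hχ : 0 ≤ χ)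
    (g w c xg : ℝ) (hg : 0 ≤ g) (hxg : |xg| ≤ Real.sqrt n * Real.sqrt g) :
    (1/2)*g + (1/2)*w^2 + χ*((2*xg + ((n:ℝ)-1)*c)*w)
      ≤ lamMax (Phi1 n χ lam0) * (g + w^2 + c^2) - lam0*c^2 := by
  have hnm1 : (0:ℝ) ≤ (n:ℝ) - 1 := by
    have : (1:ℝ) ≤ (n:ℝ) := by exact_mod_cast hn
    linarith
  have key := quad_le_lamMax_mul (Phi1 n χ lam0) ![Real.sqrt g, |w|, |c|]
  have hsum : (∑ i : Fin 3, ((![Real.sqrt g, |w|, |c|] : Fin 3 → ℝ) i) ^2) = g + w^2 + c^2 := by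
    simp [Fin.sum_univ_three, Real.sq_sqrt hg, sq_abs]
  have hquad : (![Real.sqrt g, |w|, |c|] : Fin 3 → ℝ)
        ⬝ᵥ (Phi1 n χ lam0).mulVec ![Real.sqrt g, |w|, |c|]
      = (1/2)*g + (1/2)*w^2 + lam0*c^2
        + 2*(Real.sqrt n * χ)*(Real.sqrt g*|w|) + ((n:ℝ)-1)*χ*(|w| * |c|) := by
    simp [Phi1, Phi0, Matrix.mulVec, dotProduct, Fin.sum_univ_three,
      Matrix.diagonal, Matrix.add_apply]
    linear_combination (1/2:ℝ) * Real.mul_self_sqrt hg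
      + (1/2) * abs_mul_abs_self w + lam0 * abs_mul_abs_self c
  rw [hsum, hquad] at key
  have e1 : xg*w ≤ Real.sqrt n * Real.sqrt g * |w| := by
    have h1 := le_abs_self (xg*w)
    rw [abs_mul] at h1
    nlinarith [abs_nonneg w, abs_nonneg xg]
  have e2 : c*w ≤ |w| * |c| := by
    have h1 := le_abs_self (c*w)
    rw [abs_mul, mul_comm] at h1
    linarith
  have e1' := mul_le_mul_of_nonneg_left e1 (by linarith : (0:ℝ) ≤ 2*χ)
  have e2' := mul_le_mul_of_nonneg_left e2 (mul_nonneg hnm1 hχ)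
  nlinarith [key, e1', e2']

end Aux

lemma gradSq_nonneg {n : ℕ} (u : (Fin n → ℝ) → ℝ) (x : Fin n → ℝ) : 0 ≤ gradSq u x :=
  Finset.sum_nonneg fun _ _ => sq_nonneg _

/-- **Lemma 2 (bounds on the Lyapunov function).** If the LMI `Φ₀ > 0` holds, then
for every continuously differentiable `e` vanishing on `Γ_D` and every continuous
`v` (playing the role of `e_t`), the Lyapunov functional
`V = E + χ∫_Ω [2(xᵀ∇e) + (n−1)e] v dx + (χk(n−1)/2)∫_{Γ_N} e² dΓ`, where
`E = ½∫_Ω (|∇e|² + v²) dx`, satisfies `αE ≤ V ≤ βE` with `α = 2λ_min(Φ₀)` and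
`β = 2(1 + 4/(π²n))λ_max(Φ₁) + χk(n−1)`. -/
theorem lyapunov_bounds (n : ℕ) (hn : 1 ≤ n) (k χ lam0 : ℝ)
    (hk : 0 < k) (hχ : 0 < χ) (hlam0 : 0 < lam0)
    (hΦ0 : (Phi0 n χ lam0).PosDef)
    (e : (Fin n → ℝ) → ℝ) (he : ContDiff ℝ 1 e)
    (hD : ∀ x ∈ cube n, (∃ p, x p = 0) → e x = 0)
    (v : (Fin n → ℝ) → ℝ) (hv : Continuous v)
    (E V : ℝ)
    (hE : E = (1/2) * ∫ x in cube n, (gradSq e x + (v x) ^ 2))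
    (hV : V = E + χ * (∫ x in cube n, (2 * xGrad e x + ((n:ℝ) - 1) * e x) * v x)
            + χ * k * ((n:ℝ) - 1) / 2 * faceInt (fun x => (e x) ^ 2)) :
    alphaC n χ lam0 * E ≤ V ∧ V ≤ betaC n k χ lam0 * E := by
  classical
  have hn0 : (0:ℝ) < n := by exact_mod_cast hn
  have hn1' : (1:ℝ) ≤ n := by exact_mod_cast hn
  have hnm1 : (0:ℝ) ≤ (n:ℝ) - 1 := by linarith
  have hce : Continuous e := he.continuous
  have hcg : Continuous (gradSq e) := continuous_gradSq he
  have hcx : Continuous (xGrad e) := continuous_xGrad he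
  set I1 := ∫ x in cube n, gradSq e x with hI1
  set I2 := ∫ x in cube n, (v x) ^ 2 with hI2
  set I3 := ∫ x in cube n, (e x) ^ 2 with hI3
  set W := ∫ x in cube n, (2 * xGrad e x + ((n:ℝ) - 1) * e x) * v x with hW
  have int1 : IntegrableOn (gradSq e) (cube n) volume := integrableOn_cube hcg
  have int2 : IntegrableOn (fun x => (v x)^2) (cube n) volume := integrableOn_cube (hv.pow 2)
  have int3 : IntegrableOn (fun x => (e x)^2) (cube n) volume := integrableOn_cube (hce.pow 2)
  have intW : IntegrableOn (fun x => (2 * xGrad e x + ((n:ℝ) - 1) * e x) * v x)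
      (cube n) volume :=
    integrableOn_cube (((continuous_const.mul hcx).add (continuous_const.mul hce)).mul hv)
  have hE' : E = (1/2)*(I1 + I2) := by
    rw [hE, MeasureTheory.integral_add int1 int2]
  have hI1pos : 0 ≤ I1 :=
    setIntegral_nonneg (measurableSet_cube n) (fun x _ => gradSq_nonneg e x)
  have hI2pos : 0 ≤ I2 :=
    setIntegral_nonneg (measurableSet_cube n) (fun x _ => sq_nonneg _)
  have hI3pos : 0 ≤ I3 :=
    setIntegral_nonneg (measurableSet_cube n) (fun x _ => sq_nonneg _)
  -- Poincaré inequality on the cube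
  have hsumpd : ∀ p : Fin n, IntegrableOn (fun x => (pd p e x)^2) (cube n) volume :=
    fun p => integrableOn_cube ((continuous_pd p he).pow 2)
  have hIgrad : I1 = ∑ p : Fin n, ∫ x in cube n, (pd p e x)^2 := by
    rw [hI1]
    exact integral_finset_sum _ (fun p _ => hsumpd p)
  have hpoin : (n:ℝ) * I3 ≤ (4/π^2) * I1 := by
    calc (n:ℝ)*I3 = ∑ _p : Fin n, I3 := by
          rw [Finset.sum_const, Finset.card_univ, Fintype.card_fin, nsmul_eq_mul]
      _ ≤ ∑ p : Fin n, ∫ x in cube n, (4/π^2) * (pd p e x)^2 :=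
          Finset.sum_le_sum (fun p _ => poincare_dir he hD p)
      _ = (4/π^2) * I1 := by
          rw [hIgrad, Finset.mul_sum]
          exact Finset.sum_congr rfl (fun p _ => integral_const_mul _ _)
  have hpoin' : I3 ≤ 4/(π^2*(n:ℝ)) * I1 := by
    have hpisq : (0:ℝ) < π^2 := by positivity
    rw [div_mul_eq_mul_div, le_div_iff₀ (by positivity)]
    have h1 := mul_le_mul_of_nonneg_left hpoin hpisq.le
    have h2 : π^2 * ((4/π^2) * I1) = 4*I1 := by
      field_simp
    nlinarith [h1, h2]
  -- trace inequality
  have hface : faceInt (fun x => (e x)^2) ≤ I1 := by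
    rw [faceInt, hIgrad]
    exact Finset.sum_le_sum (fun p _ => trace_dir he hD p)
  have hface0 : 0 ≤ faceInt (fun x => (e x)^2) :=
    Finset.sum_nonneg fun p _ =>
      setIntegral_nonneg (measurableSet_cube n) (fun x _ => sq_nonneg _)
  -- bound on xᵀ∇e
  have hxg : ∀ x ∈ cube n, |xGrad e x| ≤ Real.sqrt n * Real.sqrt (gradSq e x) := by
    intro x hx
    have h1 : (xGrad e x)^2 ≤ (∑ p, (x p)^2) * (∑ p, (pd p e x)^2) :=
      Finset.sum_mul_sq_le_sq_mul_sq _ _ _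
    have h2 : (∑ p, (x p)^2) ≤ (n:ℝ) := by
      calc ∑ p, (x p)^2 ≤ ∑ _p : Fin n, (1:ℝ) :=
            Finset.sum_le_sum (fun p _ => by
              have hxp := hx p (Set.mem_univ p)
              nlinarith [hxp.1, hxp.2])
        _ = n := by simp
    have h3 : (xGrad e x)^2 ≤ (n:ℝ) * gradSq e x :=
      le_trans h1 (mul_le_mul_of_nonneg_right h2 (Finset.sum_nonneg fun _ _ => sq_nonneg _))
    have h4 := Real.abs_le_sqrt h3
    rwa [Real.sqrt_mul (by positivity) _] at h4
  -- matrix facts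
  have hmin0 : 0 ≤ lamMin (Phi0 n χ lam0) := lamMin_nonneg hΦ0
  have hmax0 : 0 ≤ lamMax (Phi1 n χ lam0) :=
    le_trans (by norm_num) (half_le_lamMax_Phi1 n χ lam0)
  set L := lamMin (Phi0 n χ lam0) with hL
  set Mx := lamMax (Phi1 n χ lam0) with hMx
  -- integrated lower quadratic bound
  have ia : IntegrableOn (fun x => (1/2 - 4*lam0/(π^2*(n:ℝ))) * gradSq e x) (cube n) volume :=
    int1.const_mul _
  have ib : IntegrableOn (fun x => (1/2:ℝ) * (v x)^2) (cube n) volume := int2.const_mul _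
  have ic : IntegrableOn (fun x => lam0 * (e x)^2) (cube n) volume := int3.const_mul _
  have id' : IntegrableOn
      (fun x => χ * ((2 * xGrad e x + ((n:ℝ) - 1) * e x) * v x)) (cube n) volume :=
    intW.const_mul _
  have iab : IntegrableOn (fun x => (1/2 - 4*lam0/(π^2*(n:ℝ))) * gradSq e x
      + (1/2:ℝ) * (v x)^2) (cube n) volume := ia.add ib
  have iabc : IntegrableOn (fun x => (1/2 - 4*lam0/(π^2*(n:ℝ))) * gradSq e x
      + (1/2:ℝ) * (v x)^2 + lam0 * (e x)^2) (cube n) volume := iab.add ic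
  have i12 : IntegrableOn (fun x => gradSq e x + (v x)^2) (cube n) volume := int1.add int2
  have i123 : IntegrableOn (fun x => gradSq e x + (v x)^2 + (e x)^2) (cube n) volume :=
    i12.add int3
  have iuab : IntegrableOn (fun x => (1/2:ℝ) * gradSq e x + (1/2:ℝ) * (v x)^2)
      (cube n) volume := (int1.const_mul _).add ib
  have iLlow : IntegrableOn (fun x => L * (gradSq e x + (v x)^2)) (cube n) volume :=
    i12.const_mul _
  have iRlow : IntegrableOn (fun x => (1/2 - 4*lam0/(π^2*(n:ℝ))) * gradSq e x
      + (1/2:ℝ) * (v x)^2 + lam0 * (e x)^2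
      + χ * ((2 * xGrad e x + ((n:ℝ) - 1) * e x) * v x)) (cube n) volume := iabc.add id'
  have iLup : IntegrableOn (fun x => (1/2:ℝ) * gradSq e x + (1/2:ℝ) * (v x)^2
      + χ * ((2 * xGrad e x + ((n:ℝ) - 1) * e x) * v x)) (cube n) volume := iuab.add id'
  have hlowInt : L * (I1 + I2)
      ≤ (1/2 - 4*lam0/(π^2*(n:ℝ)))*I1 + (1/2)*I2 + lam0*I3 + χ*W := by
    have hmono := setIntegral_mono_on iLlow
      iRlow (measurableSet_cube n)
      (fun x hx => quad_lower n hn χ lam0 hχ.le hmin0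
        (gradSq e x) (v x) (e x) (xGrad e x) (gradSq_nonneg e x) (hxg x hx))
    have eL : ∫ x in cube n, L * (gradSq e x + (v x)^2) = L*(I1+I2) := by
      rw [integral_const_mul, MeasureTheory.integral_add int1 int2]
    have eR : ∫ x in cube n,
        ((1/2 - 4*lam0/(π^2*(n:ℝ))) * gradSq e x + (1/2:ℝ) * (v x)^2 + lam0 * (e x)^2
          + χ * ((2 * xGrad e x + ((n:ℝ) - 1) * e x) * v x))
        = (1/2 - 4*lam0/(π^2*(n:ℝ)))*I1 + (1/2)*I2 + lam0*I3 + χ*W := by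
      rw [MeasureTheory.integral_add iabc id',
        MeasureTheory.integral_add iab ic,
        MeasureTheory.integral_add ia ib,
        integral_const_mul, integral_const_mul, integral_const_mul, integral_const_mul]
    rw [eL, eR] at hmono
    exact hmono
  -- integrated upper quadratic bound
  have ie : IntegrableOn (fun x => Mx * (gradSq e x + (v x)^2 + (e x)^2)) (cube n) volume :=
    ((int1.add int2).add int3).const_mul _
  have hupInt : (1/2)*I1 + (1/2)*I2 + χ*W ≤ Mx*(I1+I2+I3) - lam0*I3 := by
    have iRup : IntegrableOn (fun x => Mx * (gradSq e x + (v x)^2 + (e x)^2)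
        - lam0 * (e x)^2) (cube n) volume := ie.sub ic
    have hmono := setIntegral_mono_on iLup
      iRup (measurableSet_cube n)
      (fun x hx => quad_upper n hn χ lam0 hχ.le
        (gradSq e x) (v x) (e x) (xGrad e x) (gradSq_nonneg e x) (hxg x hx))
    have eL : ∫ x in cube n,
        ((1/2:ℝ) * gradSq e x + (1/2:ℝ) * (v x)^2
          + χ * ((2 * xGrad e x + ((n:ℝ) - 1) * e x) * v x))
        = (1/2)*I1 + (1/2)*I2 + χ*W := by
      rw [MeasureTheory.integral_add iuab id',
        MeasureTheory.integral_add (int1.const_mul (1/2:ℝ)) ib,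
        integral_const_mul, integral_const_mul, integral_const_mul]
    have eR : ∫ x in cube n,
        (Mx * (gradSq e x + (v x)^2 + (e x)^2) - lam0 * (e x)^2)
        = Mx*(I1+I2+I3) - lam0*I3 := by
      rw [MeasureTheory.integral_sub ie ic, integral_const_mul, integral_const_mul,
        MeasureTheory.integral_add i12 int3,
        MeasureTheory.integral_add int1 int2]
    rw [eL, eR] at hmono
    exact hmono
  -- auxiliary nonnegativity
  have hcf : 0 ≤ χ*k*((n:ℝ)-1)/2 := by
    have := mul_nonneg (mul_nonneg hχ.le hk.le) hnm1
    linarith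
  have hlam0I3 : lam0 * I3 ≤ 4*lam0/(π^2*(n:ℝ)) * I1 := by
    have := mul_le_mul_of_nonneg_left hpoin' hlam0.le
    calc lam0 * I3 ≤ lam0 * (4/(π^2*(n:ℝ)) * I1) := this
      _ = 4*lam0/(π^2*(n:ℝ)) * I1 := by ring
  have hMxI3 : Mx * I3 ≤ Mx * (4/(π^2*(n:ℝ)) * I1) :=
    mul_le_mul_of_nonneg_left hpoin' hmax0
  constructor
  · -- lower bound
    have hαE : alphaC n χ lam0 * E = L * (I1 + I2) := by
      rw [show alphaC n χ lam0 = 2 * L from rfl, hE']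
      ring
    have hfaceterm : 0 ≤ χ * k * ((n:ℝ) - 1) / 2 * faceInt (fun x => (e x)^2) :=
      mul_nonneg hcf hface0
    rw [hαE, hV]
    linarith [hlowInt, hlam0I3, hfaceterm, hE']
  · -- upper bound
    have hβE : betaC n k χ lam0 * E
        = Mx*(I1+I2) + Mx * (4/(π^2*(n:ℝ)) * (I1+I2)) + χ*k*((n:ℝ)-1)/2*(I1+I2) := by
      rw [show betaC n k χ lam0 = 2 * (1 + 4/(π^2*n)) * Mx + χ*k*((n:ℝ)-1) from rfl, hE']
      ring
    have h5 : Mx * (4/(π^2*(n:ℝ)) * I1) ≤ Mx * (4/(π^2*(n:ℝ)) * (I1+I2)) := by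
      apply mul_le_mul_of_nonneg_left _ hmax0
      apply mul_le_mul_of_nonneg_left _ (by positivity)
      linarith
    have h6 : χ*k*((n:ℝ)-1)/2 * faceInt (fun x => (e x)^2) ≤ χ*k*((n:ℝ)-1)/2 * (I1+I2) := by
      apply mul_le_mul_of_nonneg_left _ hcf
      linarith [hface, hI2pos]
    rw [hβE, hV]
    linarith [hupInt, hMxI3, h5, h6, mul_nonneg hlam0.le hI3pos, hE']
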